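/- (van Benthem's theorem.) Let φ(x) be an FO-formula over the signature consisting of one binary predicate R and unary predicates, and let σ be the set of propositional variables whose corresponding unary predicates occur in φ. Then the following are equivalent: (1) φ(x) is logically equivalent to the standard translation of some ML-formula; (2) φ(x) is invariant under ML(σ)-bisimulations, i.e., for all Kripke models M1, M2 and worlds u1, u2, if M1,u1 ∼_{ML(σ)} M2,u2 then M1 ⊨ φ(u1) iff M2 ⊨ φ(u2). -/

import Mathlib

open FirstOrder

/-! ### Modal logic -/

/-- Formulas of propositional modal logic ML. -/
inductive ML : Type
  | top : ML
  | var : ℕ → ML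
  | and : ML → ML → ML
  | not : ML → ML
  | dia : ML → ML

/-- A Kripke model. -/
structure Kripke : Type 1 where
  W : Type
  nonempty : Nonempty W
  R : W → W → Prop
  V : ℕ → Set W

/-- Truth of an ML-formula at a world of a Kripke model. -/
def ML.sat (M : Kripke) : M.W → ML → Prop
  | _, .top => True
  | w, .var p => w ∈ M.V p
  | w, .and φ ψ => ML.sat M w φ ∧ ML.sat M w ψ
  | w, .not φ => ¬ ML.sat M w φ
  | w, .dia φ => ∃ v, M.R w v ∧ ML.sat M v φ

/-- `β` is a `σ`-bisimulation between the Kripke models `M₁` and `M₂`. -/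
def IsBisimulation (σ : Set ℕ) (M₁ M₂ : Kripke) (β : M₁.W → M₂.W → Prop) : Prop :=
  ∀ u₁ u₂, β u₁ u₂ →
    (∀ p ∈ σ, (u₁ ∈ M₁.V p ↔ u₂ ∈ M₂.V p)) ∧
    (∀ v₁, M₁.R u₁ v₁ → ∃ v₂, M₂.R u₂ v₂ ∧ β v₁ v₂) ∧
    (∀ v₂, M₂.R u₂ v₂ → ∃ v₁, M₁.R u₁ v₁ ∧ β v₁ v₂)

/-- `σ`-bisimilarity of pointed Kripke models. -/
def Bisimilar (σ : Set ℕ) (M₁ M₂ : Kripke) (w₁ : M₁.W) (w₂ : M₂.W) : Prop :=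
  ∃ β : M₁.W → M₂.W → Prop, IsBisimulation σ M₁ M₂ β ∧ β w₁ w₂

/-! ### The first-order signature of one binary predicate `R` and unary predicates -/

/-- Relation symbols: for each propositional variable `p : ℕ` a unary predicate,
and one binary predicate `R`. -/
def ModalRel : ℕ → Type
  | 0 => Empty
  | 1 => ℕ
  | 2 => Unit
  | _ + 3 => Empty

/-- The first-order language with one binary predicate and unary predicates `p : ℕ`. -/
def modalLang : FirstOrder.Language := ⟨fun _ => Empty, ModalRel⟩

/-- A Kripke model regarded as a `modalLang`-structure. -/
instance Kripke.toStructure (M : Kripke) : modalLang.Structure M.W where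
  funMap := fun f _ => Empty.elim f
  RelMap := fun {n} r =>
    match n, r with
    | 1, p => fun v => v 0 ∈ M.V p
    | 2, _ => fun v => M.R (v 0) (v 1)

/-- Auxiliary standard translation: the free variable is the last bound variable. -/
def ML.stAux : ML → (k : ℕ) → modalLang.BoundedFormula Empty (k + 1)
  | .top, k =>
      Language.BoundedFormula.equal
        (Language.Term.var (Sum.inr (Fin.last k))) (Language.Term.var (Sum.inr (Fin.last k)))
  | .var p, k =>
      Language.BoundedFormula.rel (l := 1) (show modalLang.Relations 1 from p)
        ![Language.Term.var (Sum.inr (Fin.last k))]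
  | .and φ ψ, k => (ML.stAux φ k) ⊓ (ML.stAux ψ k)
  | .not φ, k => (ML.stAux φ k).not
  | .dia φ, k =>
      Language.BoundedFormula.ex
        ((Language.BoundedFormula.rel (l := 2) (show modalLang.Relations 2 from ())
            ![Language.Term.var (Sum.inr (Fin.last k).castSucc),
              Language.Term.var (Sum.inr (Fin.last (k + 1)))]) ⊓
          (ML.stAux φ (k + 1)))

/-- The standard translation of an ML-formula: a first-order formula in one free variable. -/
def ML.st (φ : ML) : modalLang.Formula (Fin 1) :=
  (φ.stAux 0).toFormula.relabel (Sum.elim Empty.elim id)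

/-- The propositional variables corresponding to a relation symbol. -/
def relVars : ∀ {l : ℕ}, ModalRel l → Set ℕ
  | 1, p => {p}
  | 0, r => Empty.elim r
  | 2, _ => ∅
  | _ + 3, r => Empty.elim r

/-- The set of propositional variables whose unary predicates occur in a formula. -/
def unarySyms {α : Type} : ∀ {n : ℕ}, modalLang.BoundedFormula α n → Set ℕ
  | _, .falsum => ∅
  | _, .equal _ _ => ∅
  | _, .rel r _ => relVars r
  | _, .imp f g => unarySyms f ∪ unarySyms g
  | _, .all f => unarySyms f


/-! Forward direction: with the valuations restricted to `σ`, the formula `φ` is evaluated as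
before and agrees with the standard translation of `χ`, while a `σ`-bisimulation becomes a
bisimulation for all variables, which modal formulas cannot distinguish.

Backward direction: ultraproducts over a free ultrafilter on `ℕ` are modally saturated, so modal
equivalence between them is a bisimulation (Hennessy–Milner). Passing to ultrapowers and using
Łoś's theorem, a bisimulation-invariant `φ` is invariant under modal equivalence. Hence `φ` holds
wherever all of its modal consequences hold: otherwise the modal theory of a world would be
finitely satisfiable together with `φ`, and an ultraproduct of such witnesses is modally
equivalent to the world and satisfies `φ`. By compactness (once more an ultraproduct) a finite
conjunction of consequences already implies `φ`. -/

open Language Structure Filter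

instance (M : Kripke) : Nonempty M.W := M.nonempty

namespace ML

def vars : ML → Set ℕ
  | .top => ∅
  | .var p => {p}
  | .and φ ψ => vars φ ∪ vars ψ
  | .not φ => vars φ
  | .dia φ => vars φ

theorem sat_iff_of_isBisimulation {σ : Set ℕ} {M₁ M₂ : Kripke} {β : M₁.W → M₂.W → Prop}
    (hβ : IsBisimulation σ M₁ M₂ β) {χ : ML} (hχ : χ.vars ⊆ σ) {u₁ : M₁.W} {u₂ : M₂.W}
    (hu : β u₁ u₂) : sat M₁ u₁ χ ↔ sat M₂ u₂ χ := by
  induction χ generalizing u₁ u₂ with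
  | top => exact Iff.rfl
  | var p => exact (hβ u₁ u₂ hu).1 p (hχ rfl)
  | and φ ψ ihφ ihψ =>
    exact and_congr (ihφ (Set.subset_union_left.trans hχ) hu)
      (ihψ (Set.subset_union_right.trans hχ) hu)
  | not φ ih => exact not_congr (ih hχ hu)
  | dia φ ih =>
    obtain ⟨-, forth, back⟩ := hβ u₁ u₂ hu
    constructor
    · rintro ⟨v₁, huv₁, hv₁⟩
      obtain ⟨v₂, huv₂, hv⟩ := forth v₁ huv₁
      exact ⟨v₂, huv₂, (ih hχ hv).1 hv₁⟩
    · rintro ⟨v₂, huv₂, hv₂⟩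
      obtain ⟨v₁, huv₁, hv⟩ := back v₂ huv₂
      exact ⟨v₁, huv₁, (ih hχ hv).2 hv₂⟩

theorem realize_stAux (M : Kripke) (χ : ML) {k : ℕ} (e : Empty → M.W)
    (xs : Fin (k + 1) → M.W) : (χ.stAux k).Realize e xs ↔ sat M (xs (Fin.last k)) χ := by
  induction χ generalizing k with
  | top => exact iff_of_true rfl trivial
  | var p => exact Iff.rfl
  | and φ ψ ihφ ihψ => simp only [stAux, BoundedFormula.realize_inf, ihφ, ihψ, sat]
  | not φ ih => exact not_congr (ih xs)
  | dia φ ih =>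
    simp only [stAux, BoundedFormula.realize_ex, BoundedFormula.realize_inf, ih, Fin.snoc_last]
    refine exists_congr fun v => and_congr ?_ Iff.rfl
    change M.R (Fin.snoc (α := fun _ => M.W) xs v (Fin.last k).castSucc)
      (Fin.snoc (α := fun _ => M.W) xs v (Fin.last (k + 1))) ↔ _
    rw [Fin.snoc_castSucc, Fin.snoc_last]

theorem realize_st (M : Kripke) (χ : ML) (a : M.W) :
    (st χ).Realize (fun _ => a) ↔ sat M a χ := by
  rw [st, Formula.realize_relabel, BoundedFormula.realize_toFormula, realize_stAux]
  rfl

def conjUpTo (e : ℕ → ML) : ℕ → ML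
  | 0 => e 0
  | n + 1 => .and (conjUpTo e n) (e (n + 1))

theorem sat_conjUpTo {M : Kripke} {w : M.W} {e : ℕ → ML} {n : ℕ} :
    sat M w (conjUpTo e n) ↔ ∀ m ≤ n, sat M w (e m) := by
  induction n with
  | zero => simp [conjUpTo]
  | succ n ih => simp only [conjUpTo, sat, ih, Nat.le_succ_iff, or_imp, forall_and, forall_eq]

theorem vars_conjUpTo_subset {σ : Set ℕ} {e : ℕ → ML} (he : ∀ n, (e n).vars ⊆ σ) (n : ℕ) :
    (conjUpTo e n).vars ⊆ σ := by
  induction n with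
  | zero => exact he 0
  | succ n ih => exact Set.union_subset ih (he (n + 1))

def encode : ML → ℕ
  | .top => Nat.pair 0 0
  | .var p => Nat.pair 1 p
  | .and φ ψ => Nat.pair 2 (Nat.pair (encode φ) (encode ψ))
  | .not φ => Nat.pair 3 (encode φ)
  | .dia φ => Nat.pair 4 (encode φ)

theorem encode_injective : Function.Injective encode := by
  intro a
  induction a <;> intro b h <;> cases b <;> simp only [encode, Nat.pair_eq_pair] at h <;>
    grind

instance : Countable ML := encode_injective.countable

def theory (σ : Set ℕ) (M : Kripke) (w : M.W) : Set ML :=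
  {χ | χ.vars ⊆ σ ∧ sat M w χ}

theorem top_mem_theory (σ : Set ℕ) (M : Kripke) (w : M.W) : top ∈ theory σ M w :=
  ⟨Set.empty_subset σ, trivial⟩

end ML

def ModalEquiv (σ : Set ℕ) (M₁ M₂ : Kripke) (u₁ : M₁.W) (u₂ : M₂.W) : Prop :=
  ∀ χ : ML, χ.vars ⊆ σ → (ML.sat M₁ u₁ χ ↔ ML.sat M₂ u₂ χ)

theorem ModalEquiv.symm {σ : Set ℕ} {M₁ M₂ : Kripke} {u₁ : M₁.W} {u₂ : M₂.W}
    (h : ModalEquiv σ M₁ M₂ u₁ u₂) : ModalEquiv σ M₂ M₁ u₂ u₁ :=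
  fun χ hχ => (h χ hχ).symm

theorem ModalEquiv.of_forall_theory {σ : Set ℕ} {M₁ M₂ : Kripke} {u₁ : M₁.W} {u₂ : M₂.W}
    (h : ∀ χ ∈ ML.theory σ M₁ u₁, ML.sat M₂ u₂ χ) : ModalEquiv σ M₁ M₂ u₁ u₂ :=
  fun χ hχ => ⟨fun hs => h χ ⟨hχ, hs⟩, fun hs => by_contra fun hns => h (.not χ) ⟨hχ, hns⟩ hs⟩

namespace Kripke

def ofStructure (A : Type) [modalLang.Structure A] [Nonempty A] : Kripke where
  W := A
  nonempty := ‹_›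
  R a b := RelMap (show modalLang.Relations 2 from ()) ![a, b]
  V p := {a | RelMap (show modalLang.Relations 1 from p) ![a]}

theorem toStructure_ofStructure (A : Type) [S : modalLang.Structure A] [Nonempty A] :
    (ofStructure A).toStructure = S := by
  ext n r v
  · exact r.elim
  · match n, r with
    | 1, p => exact iff_of_eq (congrArg (@RelMap modalLang A S 1 p) (FinVec.etaExpand_eq v))
    | 2, r => exact iff_of_eq (congrArg (@RelMap modalLang A S 2 r) (FinVec.etaExpand_eq v))

theorem realize_ofStructure (A : Type) [modalLang.Structure A] [Nonempty A]
    (φ : modalLang.Formula (Fin 1)) (x : Fin 1 → A) :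
    @Formula.Realize _ _ (ofStructure A).toStructure _ φ x ↔ φ.Realize x := by
  rw [toStructure_ofStructure]
  exact Iff.rfl

def restrict (σ : Set ℕ) (M : Kripke) : Kripke :=
  { M with V := fun p => {a | p ∈ σ ∧ a ∈ M.V p} }

theorem realize_term_restrict (σ : Set ℕ) (M : Kripke) {γ : Type} (z : γ → M.W)
    (t : modalLang.Term γ) :
    @Term.realize _ (M.restrict σ).W (M.restrict σ).toStructure _ z t = t.realize z := by
  cases t with
  | var => rfl
  | func f _ => exact f.elim

theorem realize_restrict (σ : Set ℕ) (M : Kripke) {α : Type} {n : ℕ}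
    (ψ : modalLang.BoundedFormula α n) (hψ : unarySyms ψ ⊆ σ) (v : α → M.W)
    (xs : Fin n → M.W) :
    @BoundedFormula.Realize _ _ (M.restrict σ).toStructure _ _ ψ v xs ↔ ψ.Realize v xs := by
  induction ψ with
  | falsum => exact Iff.rfl
  | equal t₁ t₂ =>
    exact iff_of_eq
      (congrArg₂ (· = ·) (realize_term_restrict σ M _ t₁) (realize_term_restrict σ M _ t₂))
  | @rel _ l r ts =>
    have hts : (fun i => @Term.realize _ (M.restrict σ).W _ _ (Sum.elim v xs) (ts i)) =
        fun i => (ts i).realize (Sum.elim v xs) :=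
      funext fun i => realize_term_restrict σ M _ (ts i)
    change RelMap (M := (M.restrict σ).W) r _ ↔ RelMap (M := M.W) r _
    rw [hts]
    match l, r, ts, hψ with
    | 1, p, _, hψ => exact and_iff_right (hψ rfl)
    | 2, _, _, _ => exact Iff.rfl
  | imp f g ihf ihg =>
    exact imp_congr (ihf (Set.subset_union_left.trans hψ) xs)
      (ihg (Set.subset_union_right.trans hψ) xs)
  | all f ih => exact forall_congr' fun a => ih hψ (Fin.snoc xs a)

end Kripke

theorem IsBisimulation.restrict {σ : Set ℕ} {M₁ M₂ : Kripke} {β : M₁.W → M₂.W → Prop}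
    (hβ : IsBisimulation σ M₁ M₂ β) :
    IsBisimulation Set.univ (M₁.restrict σ) (M₂.restrict σ) β := by
  intro u₁ u₂ hu
  obtain ⟨hV, forth, back⟩ := hβ u₁ u₂ hu
  refine ⟨fun p _ => ?_, forth, back⟩
  by_cases hp : p ∈ σ
  · exact and_congr_right fun _ => hV p hp
  · exact iff_of_false (fun h => hp h.1) (fun h => hp h.1)

def IsBisimulationInvariant (σ : Set ℕ) (φ : modalLang.Formula (Fin 1)) : Prop :=
  ∀ (M₁ M₂ : Kripke) (u₁ : M₁.W) (u₂ : M₂.W),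
    Bisimilar σ M₁ M₂ u₁ u₂ → (φ.Realize (fun _ => u₁) ↔ φ.Realize (fun _ => u₂))

theorem isBisimulationInvariant_of_equiv_st {φ : modalLang.Formula (Fin 1)} {σ : Set ℕ}
    (hσ : unarySyms φ ⊆ σ) {χ : ML}
    (hχ : ∀ (A : Type) [modalLang.Structure A] [Nonempty A] (a : A),
      φ.Realize (fun _ => a) ↔ (ML.st χ).Realize (fun _ => a)) :
    IsBisimulationInvariant σ φ := by
  rintro M₁ M₂ u₁ u₂ ⟨β, hβ, hu⟩
  have hrestrict (M : Kripke) (u : M.W) : φ.Realize (fun _ => u) ↔ ML.sat (M.restrict σ) u χ :=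
    (M.realize_restrict σ φ hσ _ _).symm.trans
      ((hχ (M.restrict σ).W u).trans (ML.realize_st (M.restrict σ) χ u))
  rw [hrestrict M₁ u₁, hrestrict M₂ u₂]
  exact ML.sat_iff_of_isBisimulation hβ.restrict (Set.subset_univ _) hu

namespace Kripke

variable {ι : Type}

def ultraproduct (Ms : ι → Kripke) (U : Ultrafilter ι) : Kripke :=
  ofStructure ((U : Filter ι).Product fun i => (Ms i).W)

variable {Ms : ι → Kripke} (U : Ultrafilter ι)

def ultraproduct.mk (f : ∀ i, (Ms i).W) : (ultraproduct Ms U).W :=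
  show (U : Filter ι).Product fun i => (Ms i).W from ↑f

theorem ultraproduct.mk_surjective : Function.Surjective (ultraproduct.mk (Ms := Ms) U) :=
  fun w => Quotient.exists_rep w

theorem ultraproduct_R {f g : ∀ i, (Ms i).W} :
    (ultraproduct Ms U).R (ultraproduct.mk U f) (ultraproduct.mk U g) ↔
      ∀ᶠ i in (U : Filter ι), (Ms i).R (f i) (g i) := by
  have h := relMap_quotient_mk' (L := modalLang) ((U : Filter ι).productSetoid fun i => (Ms i).W)
    (show modalLang.Relations 2 from ()) ![f, g]
  rw [← FinVec.etaExpand_eq (fun k => ⟦![f, g] k⟧)] at h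
  exact h

theorem mem_ultraproduct_V {p : ℕ} {f : ∀ i, (Ms i).W} :
    ultraproduct.mk U f ∈ (ultraproduct Ms U).V p ↔ ∀ᶠ i in (U : Filter ι), f i ∈ (Ms i).V p := by
  have h := relMap_quotient_mk' (L := modalLang) ((U : Filter ι).productSetoid fun i => (Ms i).W)
    (show modalLang.Relations 1 from p) ![f]
  rw [← FinVec.etaExpand_eq (fun k => ⟦![f] k⟧)] at h
  exact h

theorem sat_ultraproduct_mk (χ : ML) (f : ∀ i, (Ms i).W) :
    ML.sat (ultraproduct Ms U) (ultraproduct.mk U f) χ ↔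
      ∀ᶠ i in (U : Filter ι), ML.sat (Ms i) (f i) χ := by
  induction χ generalizing f with
  | top => exact iff_of_true trivial (Eventually.of_forall fun _ => trivial)
  | var p => exact mem_ultraproduct_V U
  | and φ ψ ihφ ihψ => exact (and_congr (ihφ f) (ihψ f)).trans eventually_and.symm
  | not φ ih => exact (not_congr (ih f)).trans Ultrafilter.eventually_not.symm
  | dia φ ih =>
    constructor
    · rintro ⟨v, hfv, hv⟩
      obtain ⟨g, rfl⟩ := ultraproduct.mk_surjective U v
      filter_upwards [(ultraproduct_R U).1 hfv, (ih g).1 hv] with i hfg hg using ⟨g i, hfg, hg⟩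
    · intro h
      let g i := Classical.epsilon fun v => (Ms i).R (f i) v ∧ ML.sat (Ms i) v φ
      have hg : ∀ᶠ i in (U : Filter ι), (Ms i).R (f i) (g i) ∧ ML.sat (Ms i) (g i) φ :=
        h.mono fun _ => Classical.epsilon_spec
      exact ⟨ultraproduct.mk U g, (ultraproduct_R U).2 (hg.mono fun _ => And.left),
        (ih g).2 (hg.mono fun _ => And.right)⟩

theorem realize_ultraproduct_mk (φ : modalLang.Formula (Fin 1)) (f : ∀ i, (Ms i).W) :
    φ.Realize (fun _ => ultraproduct.mk U f) ↔ ∀ᶠ i in (U : Filter ι), φ.Realize (fun _ => f i) :=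
  (realize_ofStructure ((U : Filter ι).Product fun i => (Ms i).W) φ _).trans
    (Ultraproduct.realize_formula_cast φ fun _ => f)

section Saturation

variable {Ms : ℕ → Kripke} {U : Ultrafilter ℕ}

theorem sat_ultraproduct_mk_of_sat_conjUpTo (hU : (U : Filter ℕ) ≤ atTop) {e : ℕ → ML}
    {f : ∀ i, (Ms i).W} (h : ∀ i, ML.sat (Ms i) (f i) (ML.conjUpTo e i)) (n : ℕ) :
    ML.sat (ultraproduct Ms U) (ultraproduct.mk U f) (e n) :=
  (sat_ultraproduct_mk U _ f).2 <|
    ((eventually_ge_atTop n).filter_mono hU).mono fun i hi => ML.sat_conjUpTo.1 (h i) n hi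

theorem exists_R_forall_sat_of_forall_sat_dia (hU : (U : Filter ℕ) ≤ atTop) {e : ℕ → ML}
    {u : (ultraproduct Ms U).W}
    (h : ∀ i, ML.sat (ultraproduct Ms U) u (.dia (ML.conjUpTo e i))) :
    ∃ v, (ultraproduct Ms U).R u v ∧ ∀ n, ML.sat (ultraproduct Ms U) v (e n) := by
  classical
  obtain ⟨f, rfl⟩ := ultraproduct.mk_surjective U u
  let P j i : Prop := ∃ v, (Ms j).R (f j) v ∧ ML.sat (Ms j) v (ML.conjUpTo e i)
  have hP i : ∀ᶠ j in (U : Filter ℕ), P j i := (sat_ultraproduct_mk U _ f).1 (h i)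
  -- at index `j`, a successor realizing the longest prefix `conjUpTo e i` with `i ≤ j` that some
  -- successor realizes
  let g j := Classical.epsilon fun v =>
    (Ms j).R (f j) v ∧ ML.sat (Ms j) v (ML.conjUpTo e (Nat.findGreatest (P j) j))
  have hg j i (hij : i ≤ j) (hPi : P j i) :
      (Ms j).R (f j) (g j) ∧ ∀ n ≤ i, ML.sat (Ms j) (g j) (e n) := by
    obtain ⟨hR, hsat⟩ := Classical.epsilon_spec (Nat.findGreatest_spec hij hPi)
    exact ⟨hR, fun n hn => ML.sat_conjUpTo.1 hsat n (hn.trans (Nat.le_findGreatest hij hPi))⟩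
  refine ⟨ultraproduct.mk U g,
    (ultraproduct_R U).2 ((hP 0).mono fun j hj => (hg j 0 j.zero_le hj).1), fun n => ?_⟩
  refine (sat_ultraproduct_mk U _ g).2 ?_
  filter_upwards [hP n, (eventually_ge_atTop n).filter_mono hU] with j hj hnj
  exact (hg j n hnj hj).2 n le_rfl

theorem exists_R_modalEquiv_of_modalEquiv (hU : (U : Filter ℕ) ≤ atTop) {σ : Set ℕ}
    {Ns : ℕ → Kripke} {u₁ : (ultraproduct Ms U).W} {u₂ : (ultraproduct Ns U).W}
    (h : ModalEquiv σ _ _ u₁ u₂) {v₁ : (ultraproduct Ms U).W} (hv₁ : (ultraproduct Ms U).R u₁ v₁) :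
    ∃ v₂, (ultraproduct Ns U).R u₂ v₂ ∧ ModalEquiv σ _ _ v₁ v₂ := by
  obtain ⟨e, he⟩ := (Set.to_countable (ML.theory σ _ v₁)).exists_eq_range
    ⟨_, ML.top_mem_theory σ _ v₁⟩
  have hmem n : e n ∈ ML.theory σ _ v₁ := he ▸ Set.mem_range_self n
  obtain ⟨v₂, hR, hv₂⟩ := exists_R_forall_sat_of_forall_sat_dia hU fun i =>
    (h (.dia _) (ML.vars_conjUpTo_subset (fun n => (hmem n).1) i)).1
      ⟨v₁, hv₁, ML.sat_conjUpTo.2 fun n _ => (hmem n).2⟩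
  refine ⟨v₂, hR, ModalEquiv.of_forall_theory fun χ hχ => ?_⟩
  obtain ⟨n, rfl⟩ := he.symm ▸ hχ
  exact hv₂ n

theorem isBisimulation_modalEquiv (hU : (U : Filter ℕ) ≤ atTop) (σ : Set ℕ) (Ns : ℕ → Kripke) :
    IsBisimulation σ (ultraproduct Ms U) (ultraproduct Ns U) (ModalEquiv σ _ _) := by
  intro u₁ u₂ h
  refine ⟨fun p hp => h (.var p) (Set.singleton_subset_iff.2 hp),
    fun v₁ hv₁ => exists_R_modalEquiv_of_modalEquiv hU h hv₁, fun v₂ hv₂ => ?_⟩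
  obtain ⟨v₁, hR, hv⟩ := exists_R_modalEquiv_of_modalEquiv hU h.symm hv₂
  exact ⟨v₁, hR, hv.symm⟩

end Saturation

end Kripke

def modalConsequences (σ : Set ℕ) (φ : modalLang.Formula (Fin 1)) : Set ML :=
  {χ | χ.vars ⊆ σ ∧ ∀ (M : Kripke) (w : M.W), φ.Realize (fun _ => w) → ML.sat M w χ}

namespace IsBisimulationInvariant

open Kripke

variable {σ : Set ℕ} {φ : modalLang.Formula (Fin 1)}

theorem realize_iff_of_modalEquiv (hφ : IsBisimulationInvariant σ φ) {M₁ M₂ : Kripke}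
    {w₁ : M₁.W} {w₂ : M₂.W} (h : ModalEquiv σ M₁ M₂ w₁ w₂) :
    φ.Realize (fun _ => w₁) ↔ φ.Realize (fun _ => w₂) := by
  let U := hyperfilter ℕ
  let d₁ := ultraproduct.mk (Ms := fun _ => M₁) U fun _ => w₁
  let d₂ := ultraproduct.mk (Ms := fun _ => M₂) U fun _ => w₂
  have hd : ModalEquiv σ _ _ d₁ d₂ := fun χ hχ => by
    rw [sat_ultraproduct_mk, sat_ultraproduct_mk, eventually_const, eventually_const]
    exact h χ hχ
  have := hφ _ _ d₁ d₂ ⟨_, isBisimulation_modalEquiv Nat.hyperfilter_le_atTop σ _, hd⟩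
  rwa [realize_ultraproduct_mk, realize_ultraproduct_mk, eventually_const, eventually_const] at this

theorem realize_of_forall_sat_modalConsequences (hφ : IsBisimulationInvariant σ φ)
    {M : Kripke} {w : M.W} (hw : ∀ χ ∈ modalConsequences σ φ, ML.sat M w χ) :
    φ.Realize (fun _ => w) := by
  obtain ⟨e, he⟩ := (Set.to_countable (ML.theory σ M w)).exists_eq_range
    ⟨_, ML.top_mem_theory σ M w⟩
  have hmem n : e n ∈ ML.theory σ M w := he ▸ Set.mem_range_self n
  have hsat i : ∃ (N : Kripke) (v : N.W),
      φ.Realize (fun _ => v) ∧ ML.sat N v (ML.conjUpTo e i) := by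
    by_contra! hcon
    exact hw (.not _) ⟨ML.vars_conjUpTo_subset (fun n => (hmem n).1) i, hcon⟩
      (ML.sat_conjUpTo.2 fun n _ => (hmem n).2)
  choose N v hφv hv using hsat
  have hequiv : ModalEquiv σ _ _ w (ultraproduct.mk (hyperfilter ℕ) v) :=
    ModalEquiv.of_forall_theory fun χ hχ => by
      obtain ⟨n, rfl⟩ := he.symm ▸ hχ
      exact sat_ultraproduct_mk_of_sat_conjUpTo Nat.hyperfilter_le_atTop hv n
  exact (hφ.realize_iff_of_modalEquiv hequiv).2
    ((realize_ultraproduct_mk _ φ v).2 (.of_forall hφv))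

theorem exists_equiv_st (hφ : IsBisimulationInvariant σ φ) :
    ∃ χ : ML, ∀ (A : Type) [modalLang.Structure A] [Nonempty A] (a : A),
      φ.Realize (fun _ => a) ↔ (ML.st χ).Realize (fun _ => a) := by
  obtain ⟨c, hc⟩ := (Set.to_countable (modalConsequences σ φ)).exists_eq_range
    ⟨.top, Set.empty_subset σ, fun _ _ _ => trivial⟩
  have hmem n : c n ∈ modalConsequences σ φ := hc ▸ Set.mem_range_self n
  obtain ⟨i, hi⟩ : ∃ i, ∀ (M : Kripke) (w : M.W),
      ML.sat M w (ML.conjUpTo c i) → φ.Realize (fun _ => w) := by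
    by_contra! hcon
    choose K x hx hnx using hcon
    have hφx := hφ.realize_of_forall_sat_modalConsequences fun χ hχ => by
      obtain ⟨n, rfl⟩ := hc.symm ▸ hχ
      exact sat_ultraproduct_mk_of_sat_conjUpTo Nat.hyperfilter_le_atTop hx n
    obtain ⟨j, hj⟩ := ((realize_ultraproduct_mk _ φ x).1 hφx).exists
    exact hnx j hj
  refine ⟨ML.conjUpTo c i, fun A _ _ a => ?_⟩
  have hsat : @Formula.Realize _ _ (ofStructure A).toStructure _ φ (fun _ => a) ↔
      ML.sat (ofStructure A) a (ML.conjUpTo c i) :=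
    ⟨fun ha => ML.sat_conjUpTo.2 fun n _ => (hmem n).2 (ofStructure A) a ha, hi (ofStructure A) a⟩
  exact (realize_ofStructure A φ _).symm.trans <| hsat.trans <|
    (ML.realize_st (ofStructure A) _ a).symm.trans (realize_ofStructure A _ _)

end IsBisimulationInvariant

/-- van Benthem's theorem. -/
theorem van_benthem (φ : modalLang.Formula (Fin 1)) (σ : Set ℕ) (hσ : σ = unarySyms φ) :
    (∃ χ : ML, ∀ (A : Type) [modalLang.Structure A] [Nonempty A] (a : A),
        φ.Realize (fun _ => a) ↔ (ML.st χ).Realize (fun _ => a)) ↔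
      (∀ (M₁ M₂ : Kripke) (u₁ : M₁.W) (u₂ : M₂.W),
        Bisimilar σ M₁ M₂ u₁ u₂ →
          (φ.Realize (fun _ => u₁) ↔ φ.Realize (fun _ => u₂))) :=
  ⟨fun ⟨_, hχ⟩ => isBisimulationInvariant_of_equiv_st hσ.ge hχ,
    IsBisimulationInvariant.exists_equiv_st⟩
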